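/- arXiv:1611.02342 — 3 statements merged into one kernel-verified Lean document; each statement's English description precedes it below -/
import Mathlib

section
/- Let E and F be finite-dimensional normed vector spaces over ℂ, let s : E → F be differentiable, and define s̃ : E × F* → ℂ by s̃(x,φ) = φ(s(x)). Consider the scaling action of ℂ* on E × F* given by t·(x,φ) = (x, tφ). Then the set of fixed points of this action lying in the critical locus of s̃ is exactly { (x, 0) : s(x) = 0 }; that is, the ℂ*-fixed locus of the critical locus of s̃ is the zero locus of s embedded by the zero section x ↦ (x,0). -/
set_option synthInstance.maxHeartbeats 400000 in
/-- The `ℂ*`-fixed points (for the scaling action `t·(x,φ) = (x, t•φ)`) of the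
critical locus of `s̃(x,φ) = φ(s x)` are exactly the zero-section points `(x,0)`
with `s x = 0`. -/
theorem stmt6 {E F : Type*} [NormedAddCommGroup E] [NormedSpace ℂ E] [FiniteDimensional ℂ E]
    [NormedAddCommGroup F] [NormedSpace ℂ F] [FiniteDimensional ℂ F]
    (s : E → F) (hs : Differentiable ℂ s) :
    {p : E × (F →L[ℂ] ℂ) |
        fderiv ℂ (fun q : E × (F →L[ℂ] ℂ) => q.2 (s q.1)) p = 0 ∧
        ∀ t : ℂˣ, ((p.1, (t : ℂ) • p.2) : E × (F →L[ℂ] ℂ)) = p} =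
      (fun x : E => ((x, 0) : E × (F →L[ℂ] ℂ))) '' {x : E | s x = 0} := by
  have hc : Differentiable ℂ (fun q : E × (F →L[ℂ] ℂ) => q.2) := differentiable_snd
  have hu : Differentiable ℂ (fun q : E × (F →L[ℂ] ℂ) => s q.1) := hs.comp differentiable_fst
  have hderiv : ∀ p : E × (F →L[ℂ] ℂ),
      fderiv ℂ (fun q : E × (F →L[ℂ] ℂ) => q.2 (s q.1)) p =
        (p.2).comp (fderiv ℂ (fun q : E × (F →L[ℂ] ℂ) => s q.1) p) +
        (fderiv ℂ (fun q : E × (F →L[ℂ] ℂ) => q.2) p).flip (s p.1) := fun p =>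
    fderiv_clm_apply (hc p) (hu p)
  have hsnd : ∀ p : E × (F →L[ℂ] ℂ),
      fderiv ℂ (fun q : E × (F →L[ℂ] ℂ) => q.2) p = ContinuousLinearMap.snd ℂ E (F →L[ℂ] ℂ) :=
    fun p => fderiv_snd
  ext p
  simp only [Set.mem_setOf_eq, Set.mem_image]
  constructor
  · rintro ⟨hcrit, hfix⟩
    have h2 : ((2 : ℂ) • p.2 : F →L[ℂ] ℂ) = p.2 := by
      have := congrArg Prod.snd (hfix (Units.mk0 (2 : ℂ) two_ne_zero))
      simpa using this
    have hp2 : p.2 = 0 := by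
      rw [two_smul ℂ p.2] at h2
      exact add_eq_left.mp h2
    have hsx : s p.1 = 0 := by
      by_contra hne
      obtain ⟨g, hg1, hg2⟩ := exists_dual_vector ℂ (s p.1) (norm_ne_zero_iff.mpr hne)
      have h := congrFun (congrArg DFunLike.coe hcrit) (0, g)
      rw [hderiv p, hsnd p, hp2] at h
      simp only [ContinuousLinearMap.add_apply, ContinuousLinearMap.comp_apply,
        ContinuousLinearMap.zero_comp, ContinuousLinearMap.zero_apply,
        ContinuousLinearMap.flip_apply, ContinuousLinearMap.coe_snd', zero_add] at h
      rw [hg2] at h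
      exact hne (norm_eq_zero.mp (Complex.ofReal_eq_zero.mp h))
    exact ⟨p.1, hsx, by rw [← hp2]⟩
  · rintro ⟨x, hx, rfl⟩
    refine ⟨?_, fun t => Prod.ext rfl ?_⟩
    · rw [hderiv (x, 0), hsnd (x, 0)]
      have h1 : ((x, 0) : E × (F →L[ℂ] ℂ)).2 = 0 := rfl
      have h2 : s ((x, 0) : E × (F →L[ℂ] ℂ)).1 = 0 := hx
      rw [h1, h2]
      simp
    · ext y
      simp only [ContinuousLinearMap.smul_apply, ContinuousLinearMap.zero_apply, smul_zero]
end

section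
/- Let E and F be finite-dimensional normed vector spaces over ℂ, let s : E → F be twice differentiable at x with s(x) = 0, and define s̃ : E × F* → ℂ by s̃(x,φ) = φ(s(x)). Consider the Hessian bilinear form H = D²s̃(x,0) of s̃ at the zero-section point (x,0), namely H((v,ψ),(v′,ψ′)) = ψ(Ds(x)(v′)) + ψ′(Ds(x)(v)). Then the radical of H, i.e. the set of (v,ψ) ∈ E × F* with H((v,ψ),(v′,ψ′)) = 0 for all (v′,ψ′), equals (ker Ds(x)) × { ψ ∈ F* : ψ ∘ Ds(x) = 0 }. -/
/-- The radical of the Hessian bilinear form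
`H((v,ψ),(v',ψ')) = ψ(Ds(x)v') + ψ'(Ds(x)v)` of `s̃` at a zero-section point
`(x,0)` is `(ker Ds(x)) × {ψ : ψ ∘ Ds(x) = 0}`. -/
theorem stmt9 {E F : Type*} [NormedAddCommGroup E] [NormedSpace ℂ E] [FiniteDimensional ℂ E]
    [NormedAddCommGroup F] [NormedSpace ℂ F] [FiniteDimensional ℂ F]
    (s : E → F) (x : E) (hs : ContDiffAt ℂ 2 s x) (hx : s x = 0) :
    {p : E × (F →L[ℂ] ℂ) |
        ∀ q : E × (F →L[ℂ] ℂ),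
          p.2 (fderiv ℂ s x q.1) + q.2 (fderiv ℂ s x p.1) = 0} =
      (LinearMap.ker (fderiv ℂ s x : E →ₗ[ℂ] F) : Set E) ×ˢ
        {ψ : F →L[ℂ] ℂ | ψ.comp (fderiv ℂ s x) = 0} := by
  ext ⟨v, ψ⟩
  simp only [Set.mem_setOf_eq, Set.mem_prod, SetLike.mem_coe, LinearMap.mem_ker,
    ContinuousLinearMap.coe_coe]
  constructor
  · intro h
    constructor
    · -- v ∈ ker: use q = (0, ψ')
      have h1 : ∀ ψ' : F →L[ℂ] ℂ, ψ' (fderiv ℂ s x v) = 0 := by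
        intro ψ'
        have := h (0, ψ')
        simpa using this
      by_contra hne
      obtain ⟨ψ', hψ'⟩ := exists_dual_vector ℂ (fderiv ℂ s x v) (norm_ne_zero_iff.mpr hne)
      have := h1 ψ'
      rw [hψ'.2] at this
      simp [hne] at this
    · -- ψ ∘ Ds = 0: use q = (v', 0)
      ext v'
      have := h (v', 0)
      simpa using this
  · rintro ⟨hv, hψ⟩ ⟨v', ψ'⟩
    have h1 : ψ (fderiv ℂ s x v') = 0 := by
      have := ContinuousLinearMap.ext_iff.mp hψ v'
      simpa using this
    simp [h1, hv]
end

section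
/- Let E and F be finite-dimensional vector spaces over ℂ, let s : E → F be differentiable at x with s(x) = 0, and define s̃ : E × F* → ℂ by s̃(x,φ) = φ(s(x)). Then the fiber of the critical locus of s̃ over x, namely the set { φ ∈ F* : (x,φ) is a critical point of s̃ }, equals the annihilator in F* of the range of Ds(x); moreover this annihilator is linearly isomorphic to the dual space of the quotient F / range(Ds(x)). -/
/-- The annihilator of a submodule `p ⊆ F` inside the continuous dual `F →L[ℂ] ℂ`:
functionals vanishing on `p`. -/
noncomputable def contDualAnnihilator {F : Type*} [NormedAddCommGroup F] [NormedSpace ℂ F]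
    (p : Submodule ℂ F) : Submodule ℂ (F →L[ℂ] ℂ) where
  carrier := {φ : F →L[ℂ] ℂ | ∀ y ∈ p, φ y = 0}
  add_mem' := by
    intro a b ha hb y hy
    simp [ha y hy, hb y hy]
  zero_mem' := by
    intro y hy
    simp
  smul_mem' := by
    intro c a ha y hy
    simp [ha y hy]

lemma mem_contDualAnnihilator {F : Type*} [NormedAddCommGroup F] [NormedSpace ℂ F]
    (p : Submodule ℂ F) (φ : F →L[ℂ] ℂ) :
    φ ∈ contDualAnnihilator p ↔ ∀ y ∈ p, φ y = 0 := Iff.rfl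

/-- The fiber over `x` of the critical locus of `s̃(x,φ) = φ(s x)` is the
annihilator of the range of `Ds(x)`, which is linearly isomorphic to the dual
of the obstruction space `F / range Ds(x)`. -/
theorem stmt10 {E F : Type*} [NormedAddCommGroup E] [NormedSpace ℂ E] [FiniteDimensional ℂ E]
    [NormedAddCommGroup F] [NormedSpace ℂ F] [FiniteDimensional ℂ F]
    (s : E → F) (x : E) (hs : DifferentiableAt ℂ s x) (hx : s x = 0) :
    {φ : F →L[ℂ] ℂ |
        fderiv ℂ (fun p : E × (F →L[ℂ] ℂ) => p.2 (s p.1)) (x, φ) = 0} =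
      (contDualAnnihilator (LinearMap.range (fderiv ℂ s x : E →ₗ[ℂ] F)) : Set (F →L[ℂ] ℂ)) ∧
    Nonempty
      (contDualAnnihilator (LinearMap.range (fderiv ℂ s x : E →ₗ[ℂ] F)) ≃ₗ[ℂ]
        Module.Dual ℂ (F ⧸ LinearMap.range (fderiv ℂ s x : E →ₗ[ℂ] F))) := by
  set L := fderiv ℂ s x with hL
  constructor
  · -- compute the fderiv
    ext φ
    have hinner : HasFDerivAt (fun p : E × (F →L[ℂ] ℂ) => (p.2, s p.1))
        ((ContinuousLinearMap.snd ℂ E (F →L[ℂ] ℂ)).prod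
          (L.comp (ContinuousLinearMap.fst ℂ E (F →L[ℂ] ℂ)))) (x, φ) := by
      exact HasFDerivAt.prodMk (hasFDerivAt_snd) ((hs.hasFDerivAt).comp (x, φ) hasFDerivAt_fst)
    have hbil := (isBoundedBilinearMap_apply (𝕜 := ℂ) (E := F) (F := ℂ)).hasFDerivAt (φ, s x)
    have hcomp := hbil.comp (x, φ) hinner
    have hcomp' : HasFDerivAt (fun p : E × (F →L[ℂ] ℂ) => p.2 (s p.1))
        (((isBoundedBilinearMap_apply (𝕜 := ℂ) (E := F) (F := ℂ)).deriv (φ, s x)).comp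
          ((ContinuousLinearMap.snd ℂ E (F →L[ℂ] ℂ)).prod
            (L.comp (ContinuousLinearMap.fst ℂ E (F →L[ℂ] ℂ))))) (x, φ) := hcomp
    simp only [Set.mem_setOf_eq, hcomp'.fderiv, SetLike.mem_coe, mem_contDualAnnihilator]
    constructor
    · intro h y hy
      obtain ⟨v, rfl⟩ := hy
      have := congrArg (fun T => T (v, 0)) h
      simpa [hx, IsBoundedBilinearMap.deriv_apply] using this
    · intro h
      refine ContinuousLinearMap.ext fun q => ?_
      obtain ⟨v, ψ⟩ := q
      simp [hx, IsBoundedBilinearMap.deriv_apply, h (L v) ⟨v, rfl⟩]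
  · -- the annihilator is isomorphic to the dual of the quotient
    let e : Module.Dual ℂ F ≃ₗ[ℂ] (F →L[ℂ] ℂ) := LinearMap.toContinuousLinearMap
    have hmap : Submodule.map (e : Module.Dual ℂ F →ₗ[ℂ] (F →L[ℂ] ℂ))
        ((LinearMap.range (L : E →ₗ[ℂ] F)).dualAnnihilator) = contDualAnnihilator (LinearMap.range (L : E →ₗ[ℂ] F)) := by
      ext φ
      constructor
      · rintro ⟨ψ, hψ, rfl⟩ y hy
        exact (Submodule.mem_dualAnnihilator ψ).1 hψ y hy
      · intro hφ
        refine ⟨e.symm φ, (Submodule.mem_dualAnnihilator _).2 ?_, e.apply_symm_apply φ⟩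
        intro y hy
        have : e (e.symm φ) y = 0 := by rw [e.apply_symm_apply]; exact hφ y hy
        exact this
    exact ⟨((LinearEquiv.ofEq _ _ hmap.symm).trans
      (e.submoduleMap ((LinearMap.range (L : E →ₗ[ℂ] F)).dualAnnihilator)).symm).trans
      ((LinearMap.range (L : E →ₗ[ℂ] F)).dualQuotEquivDualAnnihilator).symm⟩
end
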